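/- Define η_{u,w} = #{T ⊆ [n] : T ∈ b[I^w], [n]\T ∈ b[I^w], Λ(T) = S_u} for cd-words u, w of degree n with S_u = {u_1 < ... < u_m}, u_0 = 0, u_{m+1} = n+2. Then η_{u,w} = 0 if |S_w ∩ (u_i, u_{i+1})| > 1 for some i; otherwise η_{u,w} = Π (u_{i+1} − u_i − 1), the product over those 0 ≤ i ≤ m with S_w ∩ (u_i, u_{i+1}) = ∅ (empty product = 1). -/

import Mathlib

/-- The degree of a cd-word (`false` = c, degree 1; `true` = d, degree 2). -/
def degw (w : List Bool) : ℕ := (w.map (fun b => if b then 2 else 1)).sum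

/-- The left sparse set `S_w` of a cd-word: degrees of prefixes ending at each d. -/
def Sw (w : List Bool) : Finset ℕ :=
  ((Finset.range w.length).filter (fun j => w.getD j false = true)).image
    (fun j => degw (w.take (j + 1)))

/-- `T ∈ b[I^w]`: `T` meets every interval `{i-1, i}` with `i ∈ S_w`. -/
def blocks (w : List Bool) (T : Finset ℕ) : Prop := ∀ i ∈ Sw w, i - 1 ∈ T ∨ i ∈ T

instance (w : List Bool) (T : Finset ℕ) : Decidable (blocks w T) := by
  unfold blocks; infer_instance

/-- `Λ(T) = {i ∈ T : i ≠ 1, i-1 ∉ T}`. -/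
def Lam (T : Finset ℕ) : Finset ℕ := T.filter (fun i => i ≠ 1 ∧ i - 1 ∉ T)

/-- `η_{u,w} = #{T ⊆ [n] : T ∈ b[I^w], [n]\T ∈ b[I^w], Λ(T) = S_u}`. -/
def eta (n : ℕ) (u w : List Bool) : ℕ :=
  ((Finset.Icc 1 n).powerset.filter
    (fun T => blocks w T ∧ blocks w (Finset.Icc 1 n \ T) ∧ Lam T = Sw u)).card

/-!
The two blocking conditions together say that `T` contains exactly one of `i - 1`, `i` for every
`i ∈ S_w`, while `Λ(T) = S_u` says that `T` is a disjoint union of runs `[u_i, t_i]` with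
`u_i ≤ t_i ≤ u_{i+1} - 2` (the initial run `[1, t_0]` may be empty). The runs can be chosen
independently: an element `i ∈ S_w` in the gap `(u_i, u_{i+1})` forces `t_i = i - 1`, two of them
are incompatible, and without any all `u_{i+1} - u_i - 1` ends are admissible. Peeling off the
last run gives the product formula by induction on `S_u`.
-/

open Finset

lemma degw_append (a b : List Bool) : degw (a ++ b) = degw a + degw b := by
  simp [degw]

lemma degw_le_of_prefix {a b : List Bool} (h : a <+: b) : degw a ≤ degw b := by
  obtain ⟨c, rfl⟩ := h
  rw [degw_append]
  omega

lemma degw_take_succ_of_getD {w : List Bool} {j : ℕ} (hj : j < w.length)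
    (hd : w.getD j false = true) : degw (w.take (j + 1)) = degw (w.take j) + 2 := by
  rw [List.getD_eq_getElem _ _ hj] at hd
  rw [List.take_add_one, degw_append, List.getElem?_eq_getElem hj]
  simp [degw, hd]

lemma Sw_subset_Icc (w : List Bool) : Sw w ⊆ Icc 2 (degw w) := by
  intro x hx
  simp only [Sw, mem_image, mem_filter, Finset.mem_range] at hx
  obtain ⟨j, ⟨hj, hd⟩, rfl⟩ := hx
  have := degw_take_succ_of_getD hj hd
  have := degw_le_of_prefix (w.take_prefix (j + 1))
  rw [mem_Icc]
  omega

lemma add_two_le_of_mem_Sw {w : List Bool} {x y : ℕ} (hx : x ∈ Sw w) (hy : y ∈ Sw w)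
    (hxy : x < y) : x + 2 ≤ y := by
  simp only [Sw, mem_image, mem_filter, Finset.mem_range] at hx hy
  obtain ⟨j, -, rfl⟩ := hx
  obtain ⟨k, ⟨hk, hd⟩, rfl⟩ := hy
  have hjk : j < k := by
    by_contra! h
    have := degw_le_of_prefix (List.take_prefix_take_left (l := w) (by omega : k + 1 ≤ j + 1))
    omega
  have := degw_le_of_prefix (List.take_prefix_take_left (l := w) (by omega : j + 1 ≤ k))
  have := degw_take_succ_of_getD hk hd
  omega

def Crosses (W T : Finset ℕ) : Prop := ∀ i ∈ W, (i - 1 ∈ T ↔ i ∉ T)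

instance (W T : Finset ℕ) : Decidable (Crosses W T) := by
  unfold Crosses; infer_instance

lemma blocks_and_blocks_sdiff_iff {w : List Bool} {n : ℕ} (hw : Sw w ⊆ Icc 2 n)
    (T : Finset ℕ) : blocks w T ∧ blocks w (Icc 1 n \ T) ↔ Crosses (Sw w) T := by
  simp only [blocks, Crosses, ← forall₂_and]
  refine forall₂_congr fun i hi => ?_
  have := mem_Icc.1 (hw hi)
  have hi₁ : i - 1 ∈ Icc 1 n := mem_Icc.2 ⟨by omega, by omega⟩
  have hi₂ : i ∈ Icc 1 n := mem_Icc.2 ⟨by omega, by omega⟩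
  simp only [mem_sdiff, hi₁, hi₂, true_and]
  tauto

lemma Icc_subset_of_forall_Lam_le {T : Finset ℕ} {a b : ℕ} (ha : 1 ≤ a) (hb : b ∈ T)
    (hLam : ∀ y ∈ Lam T, y ≤ a) : Icc a b ⊆ T := by
  have pred_mem : ∀ y ∈ T, a < y → y - 1 ∈ T := fun y hy hay => by
    by_contra h
    have := hLam y (mem_filter.2 ⟨hy, by omega, h⟩)
    omega
  have sub_mem : ∀ d, a ≤ b - d → b - d ∈ T := by
    intro d
    induction d with
    | zero => exact fun _ => hb
    | succ d ih =>
      intro hd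
      simpa [Nat.sub_sub] using pred_mem _ (ih (by omega)) (by omega)
  intro x hx
  rw [mem_Icc] at hx
  simpa [Nat.sub_sub_self hx.2] using sub_mem (b - x) (by omega)

lemma exists_eq_Icc_of_Lam_eq_empty {T : Finset ℕ} {N : ℕ} (hT : T ⊆ Icc 1 N)
    (hLam : Lam T = ∅) : ∃ t ≤ N, T = Icc 1 t := by
  rcases T.eq_empty_or_nonempty with rfl | hne
  · exact ⟨0, by simp⟩
  refine ⟨T.max' hne, (mem_Icc.1 (hT (T.max'_mem hne))).2, ?_⟩
  refine subset_antisymm (fun x hx => mem_Icc.2 ⟨(mem_Icc.1 (hT hx)).1, T.le_max' x hx⟩) ?_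
  exact Icc_subset_of_forall_Lam_le le_rfl (T.max'_mem hne) (by simp [hLam])

lemma exists_eq_union_Icc_of_mem_Lam {T : Finset ℕ} {a : ℕ} (hT : 0 ∉ T) (ha : a ∈ Lam T)
    (hLam : ∀ y ∈ Lam T, y ≤ a) :
    ∃ t, a ≤ t ∧ T = (T ∩ Icc 1 (a - 2)) ∪ Icc a t := by
  obtain ⟨haT, -, ha'⟩ := mem_filter.1 ha
  have hne : T.Nonempty := ⟨a, haT⟩
  refine ⟨T.max' hne, T.le_max' a haT, ?_⟩
  ext x
  simp only [mem_union, mem_inter, mem_Icc]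
  constructor
  · intro hx
    have := T.le_max' x hx
    have : x ≠ 0 := fun h => hT (h ▸ hx)
    have : x ≠ a - 1 := fun h => ha' (h ▸ hx)
    by_cases hxa : a ≤ x
    · exact Or.inr ⟨hxa, by assumption⟩
    · exact Or.inl ⟨hx, by omega, by omega⟩
  · rintro (h | h)
    · exact h.1
    · have : a ≠ 0 := fun h => hT (h ▸ haT)
      exact Icc_subset_of_forall_Lam_le (by omega) (T.max'_mem hne) hLam (mem_Icc.2 h)

lemma Lam_union_Icc {T : Finset ℕ} {a t : ℕ} (hT : T ⊆ Icc 1 (a - 2)) (ha : 2 ≤ a)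
    (hat : a ≤ t) : Lam (T ∪ Icc a t) = insert a (Lam T) := by
  have hlt : ∀ x ∈ T, 1 ≤ x ∧ x + 2 ≤ a := fun x hx => by have := mem_Icc.1 (hT hx); omega
  ext x
  simp only [Lam, mem_filter, mem_union, mem_insert, mem_Icc]
  by_cases hxa : a ≤ x
  · have hxT : x ∉ T := fun hx => by have := hlt x hx; omega
    have hx1T : x - 1 ∉ T := fun hx => by have := hlt _ hx; omega
    constructor
    · rintro ⟨hx | hx, -, h⟩
      · exact absurd hx hxT
      · left; by_contra; exact h (Or.inr ⟨by omega, by omega⟩)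
    · rintro (rfl | ⟨h, -⟩)
      · exact ⟨Or.inr ⟨le_rfl, hat⟩, by omega, fun h => h.elim hx1T fun _ => by omega⟩
      · exact absurd h hxT
  · have : ¬ (a ≤ x - 1) := by omega
    constructor
    · rintro ⟨h₁ | h₁, h₂, h₃⟩
      · exact Or.inr ⟨h₁, h₂, by tauto⟩
      · omega
    · rintro (rfl | ⟨h₁, h₂, h₃⟩)
      · omega
      · exact ⟨Or.inl h₁, h₂, by tauto⟩

lemma crosses_Icc_one_iff {W : Finset ℕ} (hW : ∀ i ∈ W, 2 ≤ i) (t : ℕ) :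
    Crosses W (Icc 1 t) ↔ ∀ i ∈ W, t = i - 1 := by
  refine forall₂_congr fun i hi => ?_
  have := hW i hi
  simp only [mem_Icc]
  omega

lemma crosses_union_Icc_iff {W T : Finset ℕ} {a t : ℕ} (hT : T ⊆ Icc 1 (a - 2)) (ha : 1 ≤ a)
    (hat : a ≤ t) :
    Crosses W (T ∪ Icc a t) ↔
      Crosses {i ∈ W | i < a} T ∧ ∀ i ∈ W, a < i → t = i - 1 := by
  have hlt : ∀ x ∈ T, x + 2 ≤ a := fun x hx => by have := mem_Icc.1 (hT hx); omega
  have crosses_at : ∀ i, ((i - 1 ∈ T ∪ Icc a t ↔ i ∉ T ∪ Icc a t) ↔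
      (i < a → (i - 1 ∈ T ↔ i ∉ T)) ∧ (a < i → t = i - 1)) := by
    intro i
    simp only [mem_union, mem_Icc]
    rcases lt_or_ge i a with h | h
    · simp only [h, true_imp_iff, show ¬ a < i by omega, false_imp_iff, and_true, or_false,
        show ¬ (a ≤ i ∧ i ≤ t) by omega, show ¬ (a ≤ i - 1 ∧ i - 1 ≤ t) by omega]
    · have h₁ : i - 1 ∉ T := fun hi => by have := hlt _ hi; omega
      have h₂ : i ∉ T := fun hi => by have := hlt _ hi; omega
      simp only [h₁, h₂, false_or, show ¬ i < a by omega, false_imp_iff, true_and]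
      omega
  simp only [Crosses, crosses_at, mem_filter, and_imp, forall_and]

def runSets (N : ℕ) (S W : Finset ℕ) : Finset (Finset ℕ) :=
  {T ∈ (Icc 1 N).powerset | Crosses W T ∧ Lam T = S}

/-- The admissible last elements `t` of the run of `T` that starts at `x` and must end before
`y - 1`; for `x = 0` this is the run starting at `1`, and `t = 0` means that it is empty. -/
def gapChoices (W : Finset ℕ) (x y : ℕ) : Finset ℕ :=
  {t ∈ Icc x (y - 2) | ∀ i ∈ Ioo x y ∩ W, t = i - 1}

lemma runSets_empty {N : ℕ} {W : Finset ℕ} (hW : W ⊆ Icc 2 (N + 1)) :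
    runSets N ∅ W = (gapChoices W 0 (N + 2)).image (Icc 1) := by
  have hW' : ∀ i ∈ W, 2 ≤ i := fun i hi => (mem_Icc.1 (hW hi)).1
  have hIoo : Ioo 0 (N + 2) ∩ W = W :=
    inter_eq_right.2 fun i hi => by have := mem_Icc.1 (hW hi); simp only [mem_Ioo]; omega
  ext T
  simp only [runSets, gapChoices, hIoo, mem_filter, mem_powerset, mem_image, mem_Icc,
    Nat.add_sub_cancel, zero_le, true_and]
  constructor
  · rintro ⟨hT, hcross, hLam⟩
    obtain ⟨t, htN, rfl⟩ := exists_eq_Icc_of_Lam_eq_empty hT hLam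
    exact ⟨t, ⟨htN, (crosses_Icc_one_iff hW' t).1 hcross⟩, rfl⟩
  · rintro ⟨t, ⟨htN, ht⟩, rfl⟩
    refine ⟨Icc_subset_Icc_right htN, (crosses_Icc_one_iff hW' t).2 ht, ?_⟩
    ext x
    simp only [Lam, mem_filter, mem_Icc, notMem_empty, iff_false]
    omega

lemma card_runSets_empty {N : ℕ} {W : Finset ℕ} (hW : W ⊆ Icc 2 (N + 1)) :
    #(runSets N ∅ W) = #(gapChoices W 0 (N + 2)) := by
  rw [runSets_empty hW, card_image_of_injective]
  intro s t h
  simpa using congrArg card h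

lemma runSets_insert {N a : ℕ} {S W : Finset ℕ} (ha : 2 ≤ a) (hS : ∀ x ∈ S, x < a)
    (hW : ∀ i ∈ W, i ≤ N + 1) :
    runSets N (insert a S) W =
      (runSets (a - 2) S {i ∈ W | i < a} ×ˢ gapChoices W a (N + 2)).image
        fun q => q.1 ∪ Icc a q.2 := by
  have haS : a ∉ S := fun h => (hS a h).false
  have last_gap : ∀ t,
      (∀ i ∈ W, a < i → t = i - 1) ↔ ∀ i ∈ Ioo a (N + 2) ∩ W, t = i - 1 := by
    intro t
    simp only [mem_inter, mem_Ioo, and_imp]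
    refine forall_congr' fun i => ⟨fun h hai _ hi => h hi hai, fun h hi hai => h hai ?_ hi⟩
    have := hW i hi
    omega
  have Lam_iff : ∀ {T t}, T ⊆ Icc 1 (a - 2) → a ≤ t →
      (Lam (T ∪ Icc a t) = insert a S ↔ Lam T = S) := by
    intro T t hT hat
    have : a ∉ Lam T := fun h => by have := mem_Icc.1 (hT (filter_subset _ _ h)); omega
    rw [Lam_union_Icc hT ha hat]
    exact ⟨fun h => by simpa [erase_insert this, erase_insert haS] using congrArg (erase · a) h,
      fun h => h ▸ rfl⟩
  ext U
  simp only [runSets, gapChoices, mem_filter, mem_powerset, mem_image, mem_product, Prod.exists,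
    Nat.add_sub_cancel]
  constructor
  · rintro ⟨hU, hcross, hLam⟩
    have h0 : 0 ∉ U := fun h => by simpa using hU h
    have haLam : a ∈ Lam U := hLam ▸ mem_insert_self a S
    have hLam_le : ∀ y ∈ Lam U, y ≤ a := fun y hy => by
      rw [hLam, mem_insert] at hy
      rcases hy with rfl | hy
      exacts [le_rfl, (hS y hy).le]
    obtain ⟨t, hat, hUeq⟩ := exists_eq_union_Icc_of_mem_Lam h0 haLam hLam_le
    set T := U ∩ Icc 1 (a - 2)
    have hT : T ⊆ Icc 1 (a - 2) := inter_subset_right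
    rw [hUeq] at hcross hLam
    have htU : t ∈ U := hUeq ▸ mem_union_right _ (right_mem_Icc.2 hat)
    obtain ⟨hcrossT, hgap⟩ := (crosses_union_Icc_iff hT (by omega) hat).1 hcross
    exact ⟨T, t, ⟨⟨hT, hcrossT, (Lam_iff hT hat).1 hLam⟩,
      mem_Icc.2 ⟨hat, (mem_Icc.1 (hU htU)).2⟩, (last_gap t).1 hgap⟩, hUeq.symm⟩
  · rintro ⟨T, t, ⟨⟨hT, hcross, hLam⟩, ht, hgap⟩, rfl⟩
    obtain ⟨hat, htN⟩ := mem_Icc.1 ht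
    refine ⟨union_subset (hT.trans (Icc_subset_Icc_right (by omega)))
      (Icc_subset_Icc (by omega) htN),
      (crosses_union_Icc_iff hT (by omega) hat).2 ⟨hcross, (last_gap t).2 hgap⟩,
      (Lam_iff hT hat).2 hLam⟩

lemma union_Icc_injOn (a : ℕ) :
    Set.InjOn (fun q : Finset ℕ × ℕ => q.1 ∪ Icc a q.2)
      {q | q.1 ⊆ Icc 1 (a - 2) ∧ a ≤ q.2} := by
  have low : ∀ T t, T ⊆ Icc 1 (a - 2) → (T ∪ Icc a t) ∩ Icc 1 (a - 2) = T := by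
    intro T t hT
    ext x
    by_cases hx : x ∈ T
    · simpa [hx] using mem_Icc.1 (hT hx)
    · simp only [mem_inter, mem_union, mem_Icc, hx, false_or, iff_false]
      omega
  have high : ∀ T t, T ⊆ Icc 1 (a - 2) → #((T ∪ Icc a t) \ T) = t + 1 - a := by
    intro T t hT
    rw [union_sdiff_left, sdiff_eq_self_of_disjoint, Nat.card_Icc]
    exact disjoint_left.2 fun x hx hx' => by
      have := mem_Icc.1 (hT hx'); have := mem_Icc.1 hx; omega
  rintro ⟨T₁, t₁⟩ ⟨hT₁, ht₁⟩ ⟨T₂, t₂⟩ ⟨hT₂, ht₂⟩ h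
  dsimp only at h hT₁ ht₁ hT₂ ht₂
  obtain rfl : T₁ = T₂ := by rw [← low T₁ t₁ hT₁, ← low T₂ t₂ hT₂, h]
  have := high T₁ t₁ hT₁
  rw [h, high T₁ t₂ hT₁] at this
  simp only [Prod.mk.injEq, true_and]
  omega

lemma card_runSets_insert {N a : ℕ} {S W : Finset ℕ} (ha : 2 ≤ a) (hS : ∀ x ∈ S, x < a)
    (hW : ∀ i ∈ W, i ≤ N + 1) :
    #(runSets N (insert a S) W) =
      #(runSets (a - 2) S {i ∈ W | i < a}) * #(gapChoices W a (N + 2)) := by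
  rw [runSets_insert ha hS hW, card_image_of_injOn, card_product]
  refine (union_Icc_injOn a).mono fun q hq => ?_
  simp only [coe_product, Set.mem_prod, mem_coe, runSets, gapChoices, mem_filter, mem_powerset,
    mem_Icc] at hq
  exact ⟨hq.1.1, hq.2.1.1⟩

lemma consecutivePairs_append_pair {α : Type*} :
    ∀ (l : List α) (x y : α),
      (l ++ [x, y]).consecutivePairs = (l ++ [x]).consecutivePairs ++ [(x, y)]
  | [], _, _ => rfl
  | [_], _, _ => rfl
  | a :: b :: l, x, y => by
    have ih := consecutivePairs_append_pair (b :: l) x y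
    simp only [List.cons_append, List.consecutivePairs, List.tail_cons,
      List.zip_cons_cons] at ih ⊢
    rw [ih]

lemma List.IsChain.rel_of_mem_consecutivePairs {α : Type*} {R : α → α → Prop} {l : List α}
    (hl : l.IsChain R) {p : α × α} (hp : p ∈ l.consecutivePairs) : R p.1 p.2 := by
  induction hl with
  | nil | singleton => simp [List.consecutivePairs] at hp
  | cons_cons hab _ ih =>
    simp only [List.consecutivePairs, List.tail_cons, List.zip_cons_cons, List.mem_cons] at hp ih
    rcases hp with rfl | hp
    exacts [hab, ih hp]

lemma gapChoices_filter_lt {W : Finset ℕ} {x y a : ℕ} (hy : y ≤ a) :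
    gapChoices {i ∈ W | i < a} x y = gapChoices W x y := by
  have : Ioo x y ∩ {i ∈ W | i < a} = Ioo x y ∩ W := by
    ext i
    simp only [mem_inter, mem_Ioo, mem_filter]
    constructor <;> intro h <;> refine ⟨h.1, ?_⟩ <;> [exact h.2.1; exact ⟨h.2, by omega⟩]
  simp only [gapChoices, this]

theorem card_runSets (l : List ℕ) {N : ℕ} {W : Finset ℕ}
    (hl : (0 :: l ++ [N + 2]).Pairwise (· + 2 ≤ ·)) (hW : W ⊆ Icc 2 (N + 1)) :
    #(runSets N l.toFinset W) =
      ((0 :: l ++ [N + 2]).consecutivePairs.map fun p => #(gapChoices W p.1 p.2)).prod := by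
  induction l using List.reverseRecOn generalizing N W with
  | nil => simp [List.consecutivePairs, card_runSets_empty hW]
  | append_singleton l a ih =>
    have hl' : (0 :: l ++ [a]).Pairwise (· + 2 ≤ ·) := hl.sublist (List.sublist_append_left _ _)
    have hS : ∀ x ∈ 0 :: l, x + 2 ≤ a := fun x hx =>
      (List.pairwise_append.1 hl').2.2 x hx a (List.mem_singleton_self a)
    obtain ⟨k, rfl⟩ : ∃ k, a = k + 2 := ⟨a - 2, by have := hS 0 (by simp); omega⟩
    have hW' : {i ∈ W | i < k + 2} ⊆ Icc 2 (k + 1) := fun i hi => by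
      simp only [mem_filter] at hi
      have := mem_Icc.1 (hW hi.1)
      exact mem_Icc.2 ⟨this.1, by omega⟩
    have hle : ∀ x ∈ (0 :: l ++ [k + 2]), x ≤ k + 2 := by
      simp only [List.mem_append, List.mem_singleton]
      rintro x (hx | rfl)
      · have := hS x hx; omega
      · rfl
    have hgap : ∀ p ∈ (0 :: l ++ [k + 2]).consecutivePairs,
        #(gapChoices {i ∈ W | i < k + 2} p.1 p.2) = #(gapChoices W p.1 p.2) := fun p hp => by
      rw [gapChoices_filter_lt (hle _ (List.mem_of_mem_tail (List.of_mem_zip hp).2))]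
    have hins : (l ++ [k + 2]).toFinset = insert (k + 2) l.toFinset := by
      ext; simp [or_comm]
    have hlt : ∀ x ∈ l.toFinset, x < k + 2 := fun x hx => by
      have := hS x (List.mem_cons_of_mem 0 (List.mem_toFinset.1 hx)); omega
    rw [hins, card_runSets_insert (by omega) hlt (fun i hi => (mem_Icc.1 (hW hi)).2),
      Nat.add_sub_cancel, ih hl' hW', List.map_congr_left hgap]
    have hsplit : 0 :: (l ++ [k + 2]) ++ [N + 2] = 0 :: l ++ [k + 2, N + 2] := by simp
    rw [hsplit, consecutivePairs_append_pair, List.map_append, List.prod_append,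
      List.map_singleton, List.prod_singleton]

lemma card_gapChoices_of_eq_empty {W : Finset ℕ} {x y : ℕ} (hxy : x + 2 ≤ y)
    (h : Ioo x y ∩ W = ∅) : #(gapChoices W x y) = y - x - 1 := by
  rw [gapChoices, filter_true_of_mem fun t _ i hi => by simp [h] at hi, Nat.card_Icc]
  omega

lemma card_gapChoices_of_card_eq_one {W : Finset ℕ} {x y : ℕ} (h : #(Ioo x y ∩ W) = 1) :
    #(gapChoices W x y) = 1 := by
  obtain ⟨i, hi⟩ := card_eq_one.1 h
  have hxy := mem_Ioo.1 (mem_inter.1 (hi ▸ mem_singleton_self i)).1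
  rw [card_eq_one]
  refine ⟨i - 1, ?_⟩
  ext t
  simp only [gapChoices, hi, mem_filter, mem_singleton, forall_eq, mem_Icc, and_iff_right_iff_imp]
  omega

lemma gapChoices_eq_empty_of_one_lt_card {W : Finset ℕ} {x y : ℕ} (h : 1 < #(Ioo x y ∩ W)) :
    gapChoices W x y = ∅ := by
  obtain ⟨i, hi, j, hj, hij⟩ := one_lt_card.1 h
  refine filter_false_of_mem fun t _ ht => hij ?_
  have := ht i hi
  have := ht j hj
  have := (mem_Ioo.1 (mem_inter.1 hi).1).1
  have := (mem_Ioo.1 (mem_inter.1 hj).1).1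
  omega

lemma prod_card_gapChoices {W : Finset ℕ} {ps : List (ℕ × ℕ)}
    (hps : ∀ p ∈ ps, p.1 + 2 ≤ p.2) :
    (ps.map fun p => #(gapChoices W p.1 p.2)).prod =
      if ∃ p ∈ ps, 1 < #(Ioo p.1 p.2 ∩ W) then 0
      else ((ps.filter fun p => decide (Ioo p.1 p.2 ∩ W = ∅)).map
        fun p => p.2 - p.1 - 1).prod := by
  split_ifs with h
  · obtain ⟨p, hp, hcard⟩ := h
    exact List.prod_eq_zero (List.mem_map.2
      ⟨p, hp, by rw [gapChoices_eq_empty_of_one_lt_card hcard, card_empty]⟩)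
  · push Not at h
    have hfactor : ∀ p ∈ ps, #(gapChoices W p.1 p.2) =
        if Ioo p.1 p.2 ∩ W = ∅ then p.2 - p.1 - 1 else 1 := by
      intro p hp
      split_ifs with hempty
      · exact card_gapChoices_of_eq_empty (hps p hp) hempty
      · have := card_pos.2 (nonempty_iff_ne_empty.2 hempty)
        exact card_gapChoices_of_card_eq_one (by have := h p hp; omega)
    rw [List.map_congr_left hfactor, List.prod_map_ite]
    simp

lemma eta_eq_card_runSets {n : ℕ} {u w : List Bool} (hw : degw w = n) :
    eta n u w = #(runSets n (Sw u) (Sw w)) := by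
  unfold eta runSets
  congr 1
  refine filter_congr fun T _ => ?_
  rw [← and_assoc, blocks_and_blocks_sdiff_iff (hw ▸ Sw_subset_Icc w)]

lemma pairwise_cons_sort_Sw_append {u : List Bool} {n : ℕ} (hu : degw u = n) :
    (0 :: (Sw u).sort (· ≤ ·) ++ [n + 2]).Pairwise (· + 2 ≤ ·) := by
  have hSu : ∀ x ∈ Sw u, 2 ≤ x ∧ x ≤ n := fun x hx =>
    mem_Icc.1 (hu ▸ Sw_subset_Icc u hx)
  have hsort : ((Sw u).sort (· ≤ ·)).Pairwise (· + 2 ≤ ·) :=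
    (sortedLT_sort (Sw u)).pairwise.imp_of_mem fun hx hy hxy =>
      add_two_le_of_mem_Sw ((mem_sort _).1 hx) ((mem_sort _).1 hy) hxy
  simp only [List.cons_append, List.pairwise_cons, List.pairwise_append, List.mem_append,
    List.mem_singleton, mem_sort, hsort, List.not_mem_nil, List.Pairwise.nil, forall_eq, true_and,
    IsEmpty.forall_iff, implies_true]
  refine ⟨fun x hx => ?_, fun x hx => ?_⟩
  · rcases hx with hx | rfl
    · have := hSu x hx; omega
    · omega
  · have := hSu x hx; omega

/-- with `S_u = {u_1 < … < u_m}`, `u_0 = 0`, `u_{m+1} = n+2`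
(consecutive pairs of the sorted list `L`), `η_{u,w} = 0` if some open interval
`(u_i, u_{i+1})` contains more than one element of `S_w`, and otherwise equals
`Π (u_{i+1} - u_i - 1)` over those `i` with `S_w ∩ (u_i, u_{i+1}) = ∅`. -/
theorem stmt_13 (n : ℕ) (u w : List Bool) (hu : degw u = n) (hw : degw w = n) :
    eta n u w =
      (let L := (insert 0 (insert (n + 2) (Sw u))).sort (· ≤ ·)
       let pairs := L.zip L.tail
       if ∃ p ∈ pairs, 1 < ((Finset.Ioo p.1 p.2) ∩ Sw w).card then 0
       else ((pairs.filter
           (fun p => decide ((Finset.Ioo p.1 p.2) ∩ Sw w = ∅))).map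
           (fun p => p.2 - p.1 - 1)).prod) := by
  set L := 0 :: (Sw u).sort (· ≤ ·) ++ [n + 2]
  have hL : L.Pairwise (· + 2 ≤ ·) := pairwise_cons_sort_Sw_append hu
  have hsort : (insert 0 (insert (n + 2) (Sw u))).sort (· ≤ ·) = L := by
    have hlt : L.Pairwise (· < ·) := hL.imp fun h => by omega
    convert (List.toFinset_sort (· ≤ ·) hlt.nodup).2 (hlt.imp le_of_lt) using 2
    ext
    simp [L]
  have hW : Sw w ⊆ Icc 2 (n + 1) :=
    (hw ▸ Sw_subset_Icc w).trans (Icc_subset_Icc_right n.le_succ)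
  have hcard := card_runSets ((Sw u).sort (· ≤ ·)) hL hW
  rw [sort_toFinset] at hcard
  rw [eta_eq_card_runSets hw, hcard,
    prod_card_gapChoices fun p hp => hL.isChain.rel_of_mem_consecutivePairs hp]
  simp only [hsort]
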